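/- Let C be a left Rees category and let a be an arrow with e = d(a). Then the set [aC, eC] contains exactly one element if and only if a is invertible, and exactly two elements if and only if a is an atom. -/
import Mathlib


open CategoryTheory

universe v u

variable {C : Type u} [Category.{v} C]

/-- The set of all arrows of a category, as a sigma type. -/
abbrev CatArr (C : Type u) [Category.{v} C] : Type (max u v) := Σ (X : C) (Y : C), X ⟶ Y

/-- An arrow is an atom if it is not invertible and in any factorization one factor
is invertible. -/
def IsAtomArrow {X Y : C} (a : X ⟶ Y) : Prop :=
  ¬ IsIso a ∧ ∀ ⦃Z : C⦄ (b : X ⟶ Z) (c : Z ⟶ Y), a = b ≫ c → IsIso b ∨ IsIso c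

/-- The principal right ideal `aC` generated by an arrow `a`. -/
def rIdeal {X Y : C} (a : X ⟶ Y) : Set (CatArr C) :=
  { p | ∃ (Z : C) (b : Y ⟶ Z), p = ⟨X, Z, a ≫ b⟩ }

/-- The principal left ideal `Ca` generated by an arrow `a`. -/
def lIdeal {X Y : C} (a : X ⟶ Y) : Set (CatArr C) :=
  { p | ∃ (Z : C) (b : Z ⟶ X), p = ⟨Z, Y, b ≫ a⟩ }

/-- The principal two-sided ideal `CaC` generated by an arrow `a`. -/
def twoIdeal {X Y : C} (a : X ⟶ Y) : Set (CatArr C) :=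
  { p | ∃ (W Z : C) (b : W ⟶ X) (c : Y ⟶ Z), p = ⟨W, Z, b ≫ a ≫ c⟩ }

/-- A category is left cancellative if `ax = ay` implies `x = y`. -/
def LeftCancellativeCat (C : Type u) [Category.{v} C] : Prop :=
  ∀ ⦃X Y Z : C⦄ (a : X ⟶ Y) (x y : Y ⟶ Z), a ≫ x = a ≫ y → x = y

/-- A category is right cancellative if `xa = ya` implies `x = y`. -/
def RightCancellativeCat (C : Type u) [Category.{v} C] : Prop :=
  ∀ ⦃X Y Z : C⦄ (x y : X ⟶ Y) (a : Y ⟶ Z), x ≫ a = y ≫ a → x = y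

/-- A category is right rigid if principal right ideals that intersect are comparable. -/
def RightRigid (C : Type u) [Category.{v} C] : Prop :=
  ∀ ⦃X Y X' Y' : C⦄ (a : X ⟶ Y) (b : X' ⟶ Y'),
    (rIdeal a ∩ rIdeal b).Nonempty → rIdeal a ⊆ rIdeal b ∨ rIdeal b ⊆ rIdeal a

/-- A category is equidivisible if every equality `ab = cd` admits an intermediate arrow. -/
def Equidivisible (C : Type u) [Category.{v} C] : Prop :=
  ∀ ⦃W X Y Z : C⦄ (a : W ⟶ X) (b : X ⟶ Z) (c : W ⟶ Y) (d : Y ⟶ Z),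
    a ≫ b = c ≫ d →
      (∃ u : Y ⟶ X, a = c ≫ u ∧ d = u ≫ b) ∨ (∃ v : X ⟶ Y, c = a ≫ v ∧ b = v ≫ d)

/-- A length functor on a category: additive on composition, zero exactly on invertible
arrows, one exactly on atoms. -/
structure LengthFunctor (C : Type u) [Category.{v} C] where
  len : ∀ ⦃X Y : C⦄, (X ⟶ Y) → ℕ
  len_comp : ∀ ⦃X Y Z : C⦄ (f : X ⟶ Y) (g : Y ⟶ Z), len (f ≫ g) = len f + len g
  len_eq_zero_iff : ∀ ⦃X Y : C⦄ (f : X ⟶ Y), len f = 0 ↔ IsIso f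
  len_eq_one_iff : ∀ ⦃X Y : C⦄ (f : X ⟶ Y), len f = 1 ↔ IsAtomArrow f

/-- A subset of the arrows is a principal right ideal if it has the form `xC`. -/
def IsPrincipalRightIdeal (S : Set (CatArr C)) : Prop :=
  ∃ (U V : C) (x : U ⟶ V), S = rIdeal x

/-- The interval `[aC, bC]` of principal right ideals between `aC` and `bC`. -/
def rInterval {X Y Z W : C} (a : X ⟶ Y) (b : Z ⟶ W) : Set (Set (CatArr C)) :=
  { S | IsPrincipalRightIdeal S ∧ rIdeal a ⊆ S ∧ S ⊆ rIdeal b }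

/-- A left Rees category: left cancellative, right rigid, and each principal right
ideal is properly contained in only finitely many principal right ideals. -/
def IsLeftReesCategory (C : Type u) [Category.{v} C] : Prop :=
  LeftCancellativeCat C ∧ RightRigid C ∧
    ∀ ⦃X Y : C⦄ (a : X ⟶ Y),
      { S : Set (CatArr C) | IsPrincipalRightIdeal S ∧ rIdeal a ⊂ S }.Finite

/-- A category is skeletal if every invertible arrow has equal domain and codomain. -/
def SkeletalCat (C : Type u) [Category.{v} C] : Prop :=
  ∀ ⦃X Y : C⦄ (g : X ⟶ Y), IsIso g → X = Y

lemma mem_rIdeal_iff' {X Y V : C} (x : X ⟶ V) (a : X ⟶ Y) :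
    (⟨X, Y, a⟩ : CatArr C) ∈ rIdeal x ↔ ∃ c : V ⟶ Y, a = x ≫ c := by
  constructor
  · rintro ⟨Z, b, hp⟩
    obtain ⟨-, hp2⟩ := Sigma.mk.inj_iff.mp hp
    obtain ⟨rfl, hp3⟩ := Sigma.mk.inj_iff.mp (eq_of_heq hp2)
    exact ⟨b, eq_of_heq hp3⟩
  · rintro ⟨c, rfl⟩; exact ⟨_, c, rfl⟩

lemma dom_eq_of_mem_one {U V X : C} (x : U ⟶ V)
    (h : (⟨U, V, x⟩ : CatArr C) ∈ rIdeal (𝟙 X)) : U = X := by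
  obtain ⟨Z, b, hp⟩ := h
  exact (Sigma.mk.inj_iff.mp hp).1

lemma mem_rIdeal_self {X Y : C} (a : X ⟶ Y) : (⟨X, Y, a⟩ : CatArr C) ∈ rIdeal a :=
  (mem_rIdeal_iff' a a).mpr ⟨𝟙 Y, by simp⟩

lemma rIdeal_subset_of_fac {X V Y : C} (x : X ⟶ V) (c : V ⟶ Y) :
    rIdeal (x ≫ c) ⊆ rIdeal x := by
  rintro p ⟨Z, b, rfl⟩; exact ⟨Z, c ≫ b, by simp⟩

lemma rIdeal_subset_one {X V : C} (x : X ⟶ V) : rIdeal x ⊆ rIdeal (𝟙 X) := by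
  rintro p ⟨Z, b, rfl⟩; exact ⟨Z, x ≫ b, by simp⟩

lemma isIso_of_unit_mem (hc : LeftCancellativeCat C) {X V : C} (x : X ⟶ V)
    (h : (⟨X, X, 𝟙 X⟩ : CatArr C) ∈ rIdeal x) : IsIso x := by
  obtain ⟨g, hg⟩ := (mem_rIdeal_iff' x (𝟙 X)).mp h
  refine ⟨g, hg.symm, hc x (g ≫ x) (𝟙 V) ?_⟩
  rw [← Category.assoc, ← hg]; simp

lemma mem_rInterval_iff {X Y : C} (a : X ⟶ Y) (S : Set (CatArr C)) :
    S ∈ rInterval a (𝟙 X) ↔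
      ∃ (V : C) (x : X ⟶ V) (c : V ⟶ Y), a = x ≫ c ∧ S = rIdeal x := by
  constructor
  · rintro ⟨⟨U, V, x, rfl⟩, hsub1, hsub2⟩
    obtain rfl : U = X := dom_eq_of_mem_one x (hsub2 (mem_rIdeal_self x))
    obtain ⟨c, hc⟩ := (mem_rIdeal_iff' x a).mp (hsub1 (mem_rIdeal_self a))
    exact ⟨V, x, c, hc, rfl⟩
  · rintro ⟨V, x, c, rfl, rfl⟩
    exact ⟨⟨X, V, x, rfl⟩, rIdeal_subset_of_fac x c, rIdeal_subset_one x⟩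

/-- In a left Rees category, `[aC, d(a)C]` has exactly one element iff `a`
is invertible, and exactly two elements iff `a` is an atom. -/
theorem interval_card_one_iff_and_two_iff (h : IsLeftReesCategory C)
    {X Y : C} (a : X ⟶ Y) :
    ((rInterval a (𝟙 X)).ncard = 1 ↔ IsIso a) ∧
    ((rInterval a (𝟙 X)).ncard = 2 ↔ IsAtomArrow a) := by
  obtain ⟨hc, -, -⟩ := h
  have haT : rIdeal a ∈ rInterval a (𝟙 X) :=
    (mem_rInterval_iff a _).mpr ⟨Y, a, 𝟙 Y, by simp, rfl⟩
  have h1T : rIdeal (𝟙 X) ∈ rInterval a (𝟙 X) :=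
    (mem_rInterval_iff a _).mpr ⟨X, 𝟙 X, a, by simp, rfl⟩
  -- if the two canonical ideals coincide, `a` is invertible
  have key : ∀ {V : C} (x : X ⟶ V), rIdeal x = rIdeal (𝟙 X) → IsIso x := by
    intro V x hx
    exact isIso_of_unit_mem hc x (hx ▸ mem_rIdeal_self (𝟙 X))
  -- if `a` is invertible, interval is a singleton
  have hiso_card : IsIso a → (rInterval a (𝟙 X)).ncard = 1 := by
    intro ha
    have : rInterval a (𝟙 X) = {rIdeal (𝟙 X)} := by
      apply Set.eq_singleton_iff_unique_mem.mpr
      refine ⟨h1T, fun S hS => ?_⟩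
      obtain ⟨V, x, c, hfac, rfl⟩ := (mem_rInterval_iff a S).mp hS
      apply subset_antisymm (rIdeal_subset_one x)
      have : rIdeal a ⊆ rIdeal x := hfac ▸ rIdeal_subset_of_fac x c
      intro p hp
      apply this
      obtain ⟨Z, b, rfl⟩ := hp
      exact ⟨Z, inv a ≫ b, by simp⟩
    rw [this, Set.ncard_singleton]
  have hcard_iso : (rInterval a (𝟙 X)).ncard = 1 → IsIso a := by
    intro h1
    obtain ⟨S, hS⟩ := Set.ncard_eq_one.mp h1
    rw [hS] at haT h1T
    have : rIdeal a = rIdeal (𝟙 X) := by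
      rw [Set.mem_singleton_iff.mp haT, Set.mem_singleton_iff.mp h1T]
    exact key a this
  refine ⟨⟨hcard_iso, hiso_card⟩, ?_, ?_⟩
  · -- ncard = 2 → atom
    intro h2
    have hfin : (rInterval a (𝟙 X)).Finite := by
      rcases Set.finite_or_infinite (rInterval a (𝟙 X)) with hf | hf
      · exact hf
      · simp [hf.ncard] at h2
    have hnia : ¬ IsIso a := fun hia => by rw [hiso_card hia] at h2; omega
    refine ⟨hnia, ?_⟩
    intro Z b c hfac
    by_contra hbc
    push_neg at hbc
    obtain ⟨hb, hcnot⟩ := hbc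
    have hbT : rIdeal b ∈ rInterval a (𝟙 X) :=
      (mem_rInterval_iff a _).mpr ⟨Z, b, c, hfac, rfl⟩
    -- three pairwise distinct elements
    have hab : rIdeal a ≠ rIdeal b := by
      intro hab
      have hbmem : (⟨X, Z, b⟩ : CatArr C) ∈ rIdeal a := hab ▸ mem_rIdeal_self b
      obtain ⟨g, hg⟩ := (mem_rIdeal_iff' a b).mp hbmem
      have hgc : g ≫ c = 𝟙 Y := by
        apply hc a
        rw [← Category.assoc, ← hg, ← hfac, Category.comp_id]
      have hcg : c ≫ g = 𝟙 Z := by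
        apply hc b
        rw [← Category.assoc, ← hfac, hg, Category.comp_id]
      exact hcnot ⟨g, hcg, hgc⟩
    have ha1 : rIdeal a ≠ rIdeal (𝟙 X) := fun he => hnia (key a he)
    have hb1 : rIdeal b ≠ rIdeal (𝟙 X) := fun he => hb (key b he)
    have hsub : {rIdeal a, rIdeal b, rIdeal (𝟙 X)} ⊆ rInterval a (𝟙 X) := by
      intro S hS
      rcases hS with rfl | rfl | rfl
      exacts [haT, hbT, h1T]
    have h3 : ({rIdeal a, rIdeal b, rIdeal (𝟙 X)} : Set (Set (CatArr C))).ncard = 3 := by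
      rw [Set.ncard_insert_of_notMem (by simp [hab, ha1]) (by
          exact (Set.finite_singleton _).insert _),
        Set.ncard_pair hb1]
    have := Set.ncard_le_ncard hsub hfin
    rw [h3, h2] at this
    omega
  · -- atom → ncard = 2
    rintro ⟨hnia, hatom⟩
    have heq : rInterval a (𝟙 X) = {rIdeal a, rIdeal (𝟙 X)} := by
      apply subset_antisymm
      · intro S hS
        obtain ⟨V, x, c, hfac, rfl⟩ := (mem_rInterval_iff a S).mp hS
        rcases hatom x c hfac with hx | hcx
        · right
          apply subset_antisymm (rIdeal_subset_one x)
          rintro p ⟨Z, b, rfl⟩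
          exact ⟨Z, inv x ≫ b, by simp⟩
        · left
          haveI := hcx
          apply subset_antisymm
          · rintro p ⟨Z, b, rfl⟩
            refine ⟨Z, inv c ≫ b, ?_⟩
            rw [hfac]
            congr 1
            simp
          · exact hfac ▸ rIdeal_subset_of_fac x c
      · intro S hS
        rcases hS with rfl | rfl
        exacts [haT, h1T]
    rw [heq, Set.ncard_pair (fun he => hnia (key a he))]
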